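/- Let G be a snark and M = {M₁, M₂, M₃} a 3-array of perfect matchings of G with exactly 3 uncovered edges. Then the core of M is a 6-cycle alternating uncovered and doubly covered edges; in particular M₁ ∩ M₂ ∩ M₃ = ∅. -/

import Mathlib

open Finset

def SimpleGraph.IsCubic {V : Type*} [Fintype V] (G : SimpleGraph V)
    [DecidableRel G.Adj] : Prop :=
  ∀ v : V, G.degree v = 3

def SimpleGraph.IsProper3EdgeColouring {V : Type*} (G : SimpleGraph V)
    (σ : Sym2 V → ZMod 2 × ZMod 2) : Prop :=
  (∀ e ∈ G.edgeSet, σ e ≠ 0) ∧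
  ∀ e ∈ G.edgeSet, ∀ f ∈ G.edgeSet, e ≠ f → ∀ v : V, v ∈ e → v ∈ f → σ e ≠ σ f

def SimpleGraph.TwoConnected {V : Type*} (G : SimpleGraph V) : Prop :=
  G.Connected ∧ ∀ v : V, (G.induce {u | u ≠ v}).Connected

def SimpleGraph.IsSnark {V : Type*} [Fintype V] (G : SimpleGraph V)
    [DecidableRel G.Adj] : Prop :=
  G.IsCubic ∧ G.TwoConnected ∧
    ¬ ∃ σ : Sym2 V → ZMod 2 × ZMod 2, G.IsProper3EdgeColouring σ

def SimpleGraph.IsPM {V : Type*} (G : SimpleGraph V) (M : Finset (Sym2 V)) : Prop :=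
  (↑M ⊆ G.edgeSet) ∧ ∀ v : V, ∃! e, e ∈ M ∧ v ∈ e

def cov {V : Type*} [DecidableEq V] (M₁ M₂ M₃ : Finset (Sym2 V)) (e : Sym2 V) : ℕ :=
  (if e ∈ M₁ then 1 else 0) + (if e ∈ M₂ then 1 else 0) + (if e ∈ M₃ then 1 else 0)

/-- The core of a 3-array: the subgraph formed by the edges not simply covered. -/
def coreGraph {V : Type*} [DecidableEq V] (G : SimpleGraph V)
    (M₁ M₂ M₃ : Finset (Sym2 V)) : SimpleGraph V where
  Adj u v := G.Adj u v ∧ cov M₁ M₂ M₃ s(u, v) ≠ 1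
  symm := by
    constructor
    intro u v h
    exact ⟨h.1.symm, by rw [Sym2.eq_swap]; exact h.2⟩
  loopless := by
    constructor
    intro v h
    exact G.loopless.irrefl v h.1

/-! Each perfect matching meets every vertex exactly once, so the coverages of the three edges at
a vertex sum to 3, and summing over the cubic graph gives `∑ₑ cov e = |E|`. Hence the number of
uncovered edges equals the number of doubly covered edges plus twice the number of triply covered
ones. A triply covered edge forces the four edges next to it to be uncovered, so with 3 uncovered
edges there is none, and the core consists of 3 uncovered and 3 doubly covered edges. At a core
vertex the coverages are then 0, 1, 2. Counting incidences between core vertices and uncovered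
edges, a union of core components has twice as many vertices as it has uncovered edges; a component
also contains a vertex and its two core neighbours, so it has at least 4 of the 6 core vertices,
and the core is connected. -/

namespace SimpleGraph

variable {V : Type*} [Fintype V] [DecidableEq V] (G : SimpleGraph V) [DecidableRel G.Adj]

theorem sum_sum_incidenceFinset (f : Sym2 V → ℕ) :
    ∑ v, ∑ e ∈ G.incidenceFinset v, f e = 2 * ∑ e ∈ G.edgeFinset, f e := by
  have h := sum_sum_bipartiteAbove_eq_sum_sum_bipartiteBelow (s := univ) (t := G.edgeFinset)
    (r := fun v e => v ∈ e) (fun _ e => f e)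
  simp only [bipartiteAbove, ← incidenceFinset_eq_filter, bipartiteBelow, sum_const] at h
  rw [h, mul_sum]
  refine sum_congr rfl fun e he => ?_
  have hcard : #{v | v ∈ e} = 2 := by
    rw [← Sym2.card_toFinset_of_not_isDiag e
      (G.not_isDiag_of_mem_edgeSet (mem_edgeFinset.mp he))]
    congr 1
    ext v
    simp [Sym2.mem_toFinset]
  rw [hcard, smul_eq_mul]

variable {G}

theorem IsPM.card_filter_incidenceFinset {M : Finset (Sym2 V)} (hM : G.IsPM M) (v : V) :
    #{e ∈ G.incidenceFinset v | e ∈ M} = 1 := by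
  obtain ⟨e, ⟨heM, hve⟩, huniq⟩ := hM.2 v
  refine card_eq_one.mpr ⟨e, eq_singleton_iff_unique_mem.mpr ⟨?_, ?_⟩⟩
  · exact mem_filter.mpr ⟨(G.mem_incidenceFinset v e).mpr ⟨hM.1 heM, hve⟩, heM⟩
  · intro f hf
    rw [mem_filter, mem_incidenceFinset] at hf
    exact huniq f ⟨hf.2, hf.1.2⟩

end SimpleGraph

theorem card_filter_eq_zero_eq_card_filter_eq_two {α : Type*} (s : Finset α) (f : α → ℕ)
    (hf : ∀ x ∈ s, f x ≤ 2) (hsum : ∑ x ∈ s, f x = #s) :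
    #{x ∈ s | f x = 0} = #{x ∈ s | f x = 2} := by
  have hpointwise : ∀ x ∈ s,
      f x + (if f x = 0 then 1 else 0) = 1 + (if f x = 2 then 1 else 0) := by
    intro x hx
    have := hf x hx
    split_ifs <;> omega
  have htotal := sum_congr rfl hpointwise
  rw [sum_add_distrib, sum_add_distrib, hsum, ← card_filter, ← card_filter,
    ← card_eq_sum_ones] at htotal
  omega

theorem card_filter_ne_one {α : Type*} [DecidableEq α] (s : Finset α) (f : α → ℕ)
    (hf : ∀ x ∈ s, f x ≤ 2) :
    #{x ∈ s | f x ≠ 1} = #{x ∈ s | f x = 0} + #{x ∈ s | f x = 2} := by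
  rw [← card_union_of_disjoint (disjoint_filter.mpr fun _ _ h0 h2 => by omega), ← filter_or]
  congr 1
  refine filter_congr fun x hx => ?_
  have := hf x hx
  omega

def IsAlternatingCore {V : Type*} [Fintype V] [DecidableEq V] (G : SimpleGraph V)
    [DecidableRel G.Adj] (M₁ M₂ M₃ : Finset (Sym2 V)) : Prop :=
  ∀ v : V, (∃ u, (coreGraph G M₁ M₂ M₃).Adj v u) →
    #{e ∈ G.edgeFinset | v ∈ e ∧ cov M₁ M₂ M₃ e = 0} = 1 ∧
    #{e ∈ G.edgeFinset | v ∈ e ∧ cov M₁ M₂ M₃ e = 2} = 1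

section ThreeArray

open SimpleGraph

variable {V : Type*} [DecidableEq V] {G : SimpleGraph V} {M₁ M₂ M₃ : Finset (Sym2 V)}

theorem cov_le_three (e : Sym2 V) : cov M₁ M₂ M₃ e ≤ 3 := by
  unfold cov
  split_ifs <;> omega

theorem exists_coreGraph_adj_of_mem {z : V} {e : Sym2 V} (he : e ∈ G.edgeSet) (hz : z ∈ e)
    (hcov : cov M₁ M₂ M₃ e ≠ 1) : ∃ y, e = s(z, y) ∧ (coreGraph G M₁ M₂ M₃).Adj z y := by
  have h := (Sym2.other_spec hz).symm
  exact ⟨_, h, G.mem_edgeSet.mp (h ▸ he), h ▸ hcov⟩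

variable [Fintype V] [DecidableRel G.Adj]

theorem sum_cov_incidenceFinset (h₁ : G.IsPM M₁) (h₂ : G.IsPM M₂) (h₃ : G.IsPM M₃) (v : V) :
    ∑ e ∈ G.incidenceFinset v, cov M₁ M₂ M₃ e = 3 := by
  simp only [cov, sum_add_distrib, ← card_filter, h₁.card_filter_incidenceFinset,
    h₂.card_filter_incidenceFinset, h₃.card_filter_incidenceFinset]

theorem sum_cov_edgeFinset (hG : G.IsCubic) (h₁ : G.IsPM M₁) (h₂ : G.IsPM M₂)
    (h₃ : G.IsPM M₃) : ∑ e ∈ G.edgeFinset, cov M₁ M₂ M₃ e = #G.edgeFinset := by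
  have hcov := G.sum_sum_incidenceFinset (cov M₁ M₂ M₃)
  have hdeg := G.sum_degrees_eq_twice_card_edges
  simp only [sum_cov_incidenceFinset h₁ h₂ h₃, hG _] at hcov hdeg
  omega

theorem four_le_card_uncovered_of_cov_eq_three (hG : G.IsCubic) (h₁ : G.IsPM M₁)
    (h₂ : G.IsPM M₂) (h₃ : G.IsPM M₃) {a b : V} (hab : G.Adj a b)
    (htriple : cov M₁ M₂ M₃ s(a, b) = 3) :
    4 ≤ #{e ∈ G.edgeFinset | cov M₁ M₂ M₃ e = 0} := by
  -- the edge `s(a, b)` already uses up the coverage 3 available at each of its ends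
  have hothers : ∀ {x y : V}, G.Adj x y → cov M₁ M₂ M₃ s(x, y) = 3 →
      (G.incidenceFinset x).erase s(x, y) ⊆ {e ∈ G.edgeFinset | cov M₁ M₂ M₃ e = 0} := by
    intro x y hxy h3 e he
    have hsum := sum_cov_incidenceFinset h₁ h₂ h₃ x
    rw [← add_sum_erase _ _ ((G.mem_incidenceFinset x _).mpr ⟨hxy, Sym2.mem_mk_left x y⟩),
      h3, add_eq_left, sum_eq_zero_iff] at hsum
    exact mem_filter.mpr ⟨G.incidenceFinset_subset x (mem_of_mem_erase he), hsum e he⟩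
  have hdisj : Disjoint ((G.incidenceFinset a).erase s(a, b))
      ((G.incidenceFinset b).erase s(b, a)) := by
    refine disjoint_left.mpr fun e hea heb => ?_
    have hae := ((G.mem_incidenceFinset a e).mp (mem_of_mem_erase hea)).2
    have hbe := ((G.mem_incidenceFinset b e).mp (mem_of_mem_erase heb)).2
    exact ne_of_mem_erase heb ((Sym2.mem_and_mem_iff hab.symm.ne).mp ⟨hbe, hae⟩)
  have hcard : ∀ {x y : V}, G.Adj x y → #((G.incidenceFinset x).erase s(x, y)) = 2 := by
    intro x y hxy
    rw [card_erase_of_mem ((G.mem_incidenceFinset x _).mpr ⟨hxy, Sym2.mem_mk_left x y⟩),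
      G.card_incidenceFinset_eq_degree, hG x]
  calc 4 = #((G.incidenceFinset a).erase s(a, b) ∪ (G.incidenceFinset b).erase s(b, a)) := by
        rw [card_union_of_disjoint hdisj, hcard hab, hcard hab.symm]
    _ ≤ _ := card_le_card (union_subset (hothers hab htriple)
        (hothers hab.symm (by rwa [Sym2.eq_swap])))

theorem cov_le_two_of_card_uncovered_lt_four (hG : G.IsCubic) (h₁ : G.IsPM M₁)
    (h₂ : G.IsPM M₂) (h₃ : G.IsPM M₃) (huncov : #{e ∈ G.edgeFinset | cov M₁ M₂ M₃ e = 0} < 4) :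
    ∀ e ∈ G.edgeFinset, cov M₁ M₂ M₃ e ≤ 2 := by
  intro e he
  induction e using Sym2.ind with
  | _ a b =>
    by_contra htriple
    have h3 : cov M₁ M₂ M₃ s(a, b) = 3 := by
      have := cov_le_three (M₁ := M₁) (M₂ := M₂) (M₃ := M₃) s(a, b)
      omega
    have := four_le_card_uncovered_of_cov_eq_three hG h₁ h₂ h₃ (mem_edgeFinset.mp he) h3
    omega

theorem isAlternatingCore_of_cov_le_two (hG : G.IsCubic) (h₁ : G.IsPM M₁) (h₂ : G.IsPM M₂)
    (h₃ : G.IsPM M₃) (hcov : ∀ e ∈ G.edgeFinset, cov M₁ M₂ M₃ e ≤ 2) :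
    IsAlternatingCore G M₁ M₂ M₃ := by
  rintro v ⟨u, hadj, hu⟩
  have hinc : ∀ k, #{e ∈ G.edgeFinset | v ∈ e ∧ cov M₁ M₂ M₃ e = k} =
      #{e ∈ G.incidenceFinset v | cov M₁ M₂ M₃ e = k} := by
    intro k
    rw [G.incidenceFinset_eq_filter, filter_filter]
  have hle : ∀ e ∈ G.incidenceFinset v, cov M₁ M₂ M₃ e ≤ 2 :=
    fun e he => hcov e (G.incidenceFinset_subset v he)
  have hsum : ∑ e ∈ G.incidenceFinset v, cov M₁ M₂ M₃ e = #(G.incidenceFinset v) := by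
    rw [sum_cov_incidenceFinset h₁ h₂ h₃, G.card_incidenceFinset_eq_degree, hG v]
  have hbalance := card_filter_eq_zero_eq_card_filter_eq_two _ _ hle hsum
  have hcore : 0 < #{e ∈ G.incidenceFinset v | cov M₁ M₂ M₃ e ≠ 1} :=
    card_pos.mpr ⟨s(v, u), mem_filter.mpr ⟨(G.mem_incidenceFinset v _).mpr
      ⟨hadj, Sym2.mem_mk_left v u⟩, hu⟩⟩
  have hthree : #{e ∈ G.incidenceFinset v | cov M₁ M₂ M₃ e ≠ 1} ≤ 3 :=
    (card_filter_le _ _).trans (G.card_incidenceFinset_eq_degree v ▸ (hG v).le)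
  rw [card_filter_ne_one _ _ hle] at hcore hthree
  rw [hinc, hinc]
  omega

theorem card_eq_two_mul_card_uncovered_of_closed (halt : IsAlternatingCore G M₁ M₂ M₃)
    {A : Finset V} (hcore : ∀ x ∈ A, ∃ y, (coreGraph G M₁ M₂ M₃).Adj x y)
    (hclosed : ∀ x ∈ A, ∀ y, (coreGraph G M₁ M₂ M₃).Adj x y → y ∈ A) :
    #A = 2 * #{e ∈ G.edgeFinset | cov M₁ M₂ M₃ e = 0 ∧ ∃ x ∈ A, x ∈ e} := by
  have hone : ∀ x ∈ A, #({e ∈ G.edgeFinset | cov M₁ M₂ M₃ e = 0 ∧ ∃ x ∈ A, x ∈ e}.bipartiteAbove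
      (fun x e => x ∈ e) x) = 1 := by
    intro x hx
    rw [bipartiteAbove, filter_filter, ← (halt x (hcore x hx)).1]
    congr 1
    exact filter_congr fun e _ => ⟨fun h => ⟨h.2, h.1.1⟩, fun h => ⟨⟨h.2, x, hx, h.1⟩, h.1⟩⟩
  have htwo : ∀ e ∈ {e ∈ G.edgeFinset | cov M₁ M₂ M₃ e = 0 ∧ ∃ x ∈ A, x ∈ e},
      #(A.bipartiteBelow (fun x e => x ∈ e) e) = 2 := by
    intro e he
    obtain ⟨he, h0, x, hx, hxe⟩ := mem_filter.mp he
    obtain ⟨y, rfl, hxy⟩ :=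
      exists_coreGraph_adj_of_mem (mem_edgeFinset.mp he) hxe (ne_of_eq_of_ne h0 zero_ne_one)
    have hy := hclosed x hx y hxy
    have hends : A.bipartiteBelow (fun x e => x ∈ e) s(x, y) = s(x, y).toFinset := by
      ext z
      rw [mem_bipartiteBelow, Sym2.mem_toFinset]
      refine ⟨And.right, fun hz => ⟨?_, hz⟩⟩
      rcases Sym2.mem_iff.mp hz with rfl | rfl
      exacts [hx, hy]
    rw [hends, Sym2.card_toFinset_of_not_isDiag _ (G.not_isDiag_of_mem_edgeSet
      (mem_edgeFinset.mp he))]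
  simpa [mul_comm] using card_mul_eq_card_mul _ hone htwo

theorem four_le_card_of_closed (halt : IsAlternatingCore G M₁ M₂ M₃) {C : Finset V}
    (hcore : ∀ x ∈ C, ∃ y, (coreGraph G M₁ M₂ M₃).Adj x y)
    (hclosed : ∀ x ∈ C, ∀ y, (coreGraph G M₁ M₂ M₃).Adj x y → y ∈ C) {z : V} (hz : z ∈ C) :
    4 ≤ #C := by
  have heven := card_eq_two_mul_card_uncovered_of_closed halt hcore hclosed
  obtain ⟨h0, h2⟩ := halt z (hcore z hz)
  obtain ⟨e₀, he₀⟩ := card_pos.mp (h0 ▸ Nat.one_pos)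
  obtain ⟨e₂, he₂⟩ := card_pos.mp (h2 ▸ Nat.one_pos)
  obtain ⟨he₀, hze₀, hcov₀⟩ := mem_filter.mp he₀
  obtain ⟨he₂, hze₂, hcov₂⟩ := mem_filter.mp he₂
  obtain ⟨a, rfl, hza⟩ := exists_coreGraph_adj_of_mem (mem_edgeFinset.mp he₀) hze₀
    (ne_of_eq_of_ne hcov₀ zero_ne_one)
  obtain ⟨b, rfl, hzb⟩ := exists_coreGraph_adj_of_mem (mem_edgeFinset.mp he₂) hze₂
    (ne_of_eq_of_ne hcov₂ (by decide))
  have hab : a ≠ b := by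
    rintro rfl
    omega
  have htriangle : #{z, a, b} = 3 := by
    rw [card_insert_of_notMem (by simp [hza.1.ne, hzb.1.ne]), card_pair hab]
  have hsub : {z, a, b} ⊆ C := by
    simp only [insert_subset_iff, singleton_subset_iff]
    exact ⟨hz, hclosed z hz a hza, hclosed z hz b hzb⟩
  have := card_le_card hsub
  omega

theorem coreGraph_reachable (halt : IsAlternatingCore G M₁ M₂ M₃)
    (huncov : #{e ∈ G.edgeFinset | cov M₁ M₂ M₃ e = 0} = 3) {u v : V}
    (hu : ∃ w, (coreGraph G M₁ M₂ M₃).Adj u w) (hv : ∃ w, (coreGraph G M₁ M₂ M₃).Adj v w) :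
    (coreGraph G M₁ M₂ M₃).Reachable u v := by
  classical
  set S : Finset V := {x | ∃ y, (coreGraph G M₁ M₂ M₃).Adj x y}
  have hS : ∀ x ∈ S, ∃ y, (coreGraph G M₁ M₂ M₃).Adj x y := fun x hx => (mem_filter.mp hx).2
  have hcardS : #S = 6 := by
    have hmeet : {e ∈ G.edgeFinset | cov M₁ M₂ M₃ e = 0 ∧ ∃ x ∈ S, x ∈ e} =
        {e ∈ G.edgeFinset | cov M₁ M₂ M₃ e = 0} := by
      refine filter_congr fun e he => and_iff_left_of_imp fun h0 => ?_
      obtain ⟨y, -, hxy⟩ := exists_coreGraph_adj_of_mem (mem_edgeFinset.mp he)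
        (Sym2.out_fst_mem e) (ne_of_eq_of_ne h0 zero_ne_one)
      exact ⟨_, mem_filter.mpr ⟨mem_univ _, y, hxy⟩, Sym2.out_fst_mem e⟩
    rw [card_eq_two_mul_card_uncovered_of_closed halt hS
      (fun x _ y hxy => mem_filter.mpr ⟨mem_univ y, x, hxy.symm⟩), hmeet, huncov]
  have hcomponent : ∀ w, (∃ y, (coreGraph G M₁ M₂ M₃).Adj w y) →
      4 ≤ #{x ∈ S | (coreGraph G M₁ M₂ M₃).Reachable w x} := by
    intro w hw
    refine four_le_card_of_closed halt (fun x hx => hS x (mem_filter.mp hx).1) ?_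
      (mem_filter.mpr ⟨mem_filter.mpr ⟨mem_univ w, hw⟩, .refl w⟩)
    intro x hx y hxy
    obtain ⟨-, hwx⟩ := mem_filter.mp hx
    exact mem_filter.mpr ⟨mem_filter.mpr ⟨mem_univ y, x, hxy.symm⟩, hwx.trans hxy.reachable⟩
  by_contra huv
  have hdisj : Disjoint {x ∈ S | (coreGraph G M₁ M₂ M₃).Reachable u x}
      {x ∈ S | (coreGraph G M₁ M₂ M₃).Reachable v x} :=
    disjoint_filter.mpr fun x _ hux hvx => huv (hux.trans hvx.symm)
  have hunion : #({x ∈ S | (coreGraph G M₁ M₂ M₃).Reachable u x} ∪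
      {x ∈ S | (coreGraph G M₁ M₂ M₃).Reachable v x}) ≤ #S :=
    card_le_card (union_subset (filter_subset _ S) (filter_subset _ S))
  rw [card_union_of_disjoint hdisj] at hunion
  have hu4 := hcomponent u hu
  have hv4 := hcomponent v hv
  omega

end ThreeArray

/-- If a 3-array of a snark has exactly 3 uncovered edges, then its core is a 6-cycle
alternating uncovered and doubly covered edges; in particular the three matchings
have empty intersection. -/
theorem three_uncovered_core_is_hexagon {V : Type*} [Fintype V] [DecidableEq V]
    (G : SimpleGraph V) [DecidableRel G.Adj] (hG : G.IsSnark)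
    (M₁ M₂ M₃ : Finset (Sym2 V)) (h₁ : G.IsPM M₁) (h₂ : G.IsPM M₂) (h₃ : G.IsPM M₃)
    (huncov : (G.edgeFinset.filter (fun e => cov M₁ M₂ M₃ e = 0)).card = 3) :
    M₁ ∩ M₂ ∩ M₃ = ∅ ∧
    (G.edgeFinset.filter (fun e => cov M₁ M₂ M₃ e ≠ 1)).card = 6 ∧
    (∀ v : V, (∃ u, (coreGraph G M₁ M₂ M₃).Adj v u) →
      (G.edgeFinset.filter (fun f => v ∈ f ∧ cov M₁ M₂ M₃ f = 0)).card = 1 ∧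
      (G.edgeFinset.filter (fun f => v ∈ f ∧ cov M₁ M₂ M₃ f = 2)).card = 1) ∧
    (∀ u v : V, (∃ w, (coreGraph G M₁ M₂ M₃).Adj u w) →
      (∃ w, (coreGraph G M₁ M₂ M₃).Adj v w) →
      (coreGraph G M₁ M₂ M₃).Reachable u v) := by
  obtain ⟨hcubic, -, -⟩ := hG
  have hcov := cov_le_two_of_card_uncovered_lt_four hcubic h₁ h₂ h₃ (by omega)
  have halt := isAlternatingCore_of_cov_le_two hcubic h₁ h₂ h₃ hcov
  have hdouble : #{e ∈ G.edgeFinset | cov M₁ M₂ M₃ e = 2} = 3 :=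
    card_filter_eq_zero_eq_card_filter_eq_two _ _ hcov (sum_cov_edgeFinset hcubic h₁ h₂ h₃) ▸
      huncov
  refine ⟨?_, ?_, halt, fun u v => coreGraph_reachable halt huncov⟩
  · refine eq_empty_iff_forall_notMem.mpr fun e he => ?_
    obtain ⟨⟨he₁, he₂⟩, he₃⟩ := mem_inter.mp he |>.imp_left mem_inter.mp
    have htriple := hcov e (SimpleGraph.mem_edgeFinset.mpr (h₁.1 he₁))
    simp [cov, he₁, he₂, he₃] at htriple
  · rw [card_filter_ne_one _ _ hcov, huncov, hdouble]
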